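/- arXiv:math/9712259 — 4 statements merged into one kernel-verified Lean document; each statement's English description precedes it below -/
import Mathlib

section
/- For each non-crossing perfect matching G of {1,...,2n}, let t_G = Σ_{g} (−1)^{inv(g)} b_g ∈ V^{⊗2n}, where the sum is over the 2^n orientations g of G, b_g is the basis tensor placing x at the tail and y at the head of each arrow, and inv(g) is the number of arrows directed right-to-left. Then the family {t_G}, as G ranges over all non-crossing perfect matchings of {1,...,2n}, is linearly independent in V^{⊗2n}. -/
open Classical Finset PiTensorProduct
open scoped TensorProduct

/-- Non-crossing perfect matchings of Fin (2n), encoded as fixed-point-free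
involutions with no crossing pattern a < b < p a < p b. -/
def NCMatching (n : ℕ) : Type :=
  {p : Fin (2 * n) → Fin (2 * n) //
    Function.Involutive p ∧ (∀ i, p i ≠ i) ∧
    ∀ a b, ¬(a < b ∧ b < p a ∧ p a < p b)}

noncomputable instance (n : ℕ) : Fintype (NCMatching n) := by
  unfold NCMatching; infer_instance

/-- t_G = Σ_g (−1)^{inv g} b_g ∈ V^{⊗2n}, the sum being over the 2^n
orientations of the matching G.  An orientation is encoded by the set of heads
o : Fin (2n) → Bool (exactly one end of each edge is a head); the basis tensor
b_g puts x = (1,0) at each tail and y = (0,1) at each head, and inv g counts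
the edges directed right-to-left, i.e. heads i with i < p i. -/
noncomputable def tMatch {f : Type*} [Field f] (n : ℕ) (G : NCMatching n) :
    ⨂[f] (_ : Fin (2 * n)), (Fin 2 → f) :=
  ∑ o : {o : Fin (2 * n) → Bool // ∀ i, o (G.1 i) = !(o i)},
    ((-1 : ℤ) ^ (Finset.univ.filter fun i => o.1 i = true ∧ i < G.1 i).card) •
      PiTensorProduct.tprod f (fun i => if o.1 i then ![0, 1] else ![1, 0])

/-! The orientation of a non-crossing matching `G` with every arc pointing from left to right
(heads at the closing ends) is the lexicographically smallest orientation of `G`, and it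
determines `G`. If the coordinate of `t_H` at the basis tensor of this orientation of `G` is
nonzero for `H ≠ G`, that word is therefore a non-minimal orientation of `H`, so the canonical word
of `H` is lexicographically smaller: the coordinate matrix is triangular with diagonal
entries `±1`. -/

theorem linearIndependent_of_triangular {ι R M κ : Type*} [Ring R] [NoZeroDivisors R]
    [AddCommGroup M] [Module R M] [LinearOrder κ] {v : ι → M} (φ : ι → M →ₗ[R] R)
    (key : ι → κ) (hdiag : ∀ i, φ i (v i) ≠ 0)
    (htri : ∀ i j, j ≠ i → φ i (v j) ≠ 0 → key j < key i) :
    LinearIndependent R v := by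
  rw [linearIndependent_iff']
  intro s g hsum i hi
  by_contra hgi
  obtain ⟨j, hj, hmin⟩ :=
    (s.filter (g · ≠ 0)).exists_min_image key ⟨i, mem_filter.2 ⟨hi, hgi⟩⟩
  rw [mem_filter] at hj
  have hφ := congrArg (φ j) hsum
  rw [map_sum, map_zero, sum_eq_single j, map_smul, smul_eq_mul] at hφ
  · exact mul_ne_zero hj.2 (hdiag j) hφ
  · intro k hk hkj
    by_cases hgk : g k = 0
    · rw [hgk, zero_smul, map_zero]
    · rw [map_smul, smul_eq_mul, not_ne_iff.1 fun h => (hmin k (mem_filter.2 ⟨hk, hgk⟩)).not_gt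
        (htri j k hkj h), mul_zero]
  · exact fun h => absurd hj.1 h

section Coordinates

variable {R : Type*} [CommSemiring R] {ι : Type*} [Fintype ι]

noncomputable def coeffWord (w : ι → Bool) : (⨂[R] (_ : ι), (Fin 2 → R)) →ₗ[R] R :=
  (Basis.piTensorProduct fun _ => Pi.basisFun R (Fin 2)).coord fun i => if w i then 1 else 0

theorem coeffWord_tprod (w o : ι → Bool) :
    coeffWord w (tprod R fun i => if o i then ![0, 1] else ![1, 0]) = if o = w then 1 else 0 := by
  have hfactor : ∀ i, (if o i then ![(0 : R), 1] else ![1, 0]) (if w i then 1 else 0) =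
      if o i = w i then 1 else 0 := fun i => by cases o i <;> cases w i <;> simp
  rw [coeffWord, Module.Basis.coord_apply, Basis.piTensorProduct_repr_tprod_apply]
  simp only [Pi.basisFun_repr, hfactor, Fintype.prod_boole, funext_iff]

end Coordinates

theorem coeffWord_tMatch_ne_zero_iff {f : Type*} [Field f] {n : ℕ} (G : NCMatching n)
    (w : Fin (2 * n) → Bool) :
    coeffWord w (tMatch (f := f) n G) ≠ 0 ↔ ∀ i, w (G.1 i) = !(w i) := by
  simp only [tMatch, map_sum, map_zsmul, coeffWord_tprod, smul_ite, smul_zero]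
  constructor
  · intro h
    obtain ⟨o, -, ho⟩ := exists_ne_zero_of_sum_ne_zero h
    exact (ite_ne_right_iff.1 ho).1 ▸ o.2
  · intro hw
    rw [sum_eq_single ⟨w, hw⟩ (fun o _ ho => if_neg fun h => ho (Subtype.ext h)) (by simp),
      if_pos rfl]
    simp

section NonCrossing

variable {α : Type*} [LinearOrder α] {p q : α → α}

def NonCrossing (p : α → α) : Prop :=
  ∀ a b, ¬(a < b ∧ b < p a ∧ p a < p b)

theorem NonCrossing.apply_mem_Ioo (hnc : NonCrossing p) (hinv : Function.Involutive p)
    {a b : α} (hab : a < b) (hb : b < p a) : p b ∈ Set.Ioo a (p a) := by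
  have hlo : a < p b := by
    refine lt_of_le_of_ne (le_of_not_gt fun h => hnc (p b) a ⟨h, ?_⟩) fun h => hb.ne ?_
    · rw [hinv]; exact ⟨hab, hb⟩
    · rw [h, hinv]
  exact ⟨hlo, lt_of_le_of_ne (le_of_not_gt fun h => hnc a b ⟨hab, hb, h⟩)
    fun h => hab.ne' (hinv.injective h)⟩

/-- If `q` matches the points strictly inside the arc `(a, p a)` as `p` does, the partner `q a`
of the opener `a` can lie neither inside that arc nor beyond `p a`: in the latter case the
partner of `p a` would lie left of `a`, and the arcs at `a` and at `p a` would cross. -/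
theorem NonCrossing.apply_eq_of_eqOn_Ioo (hncq : NonCrossing q) (hinvp : Function.Involutive p)
    (hinvq : Function.Involutive q) {a : α} (ha : a < p a) (hqa : a < q a)
    (hqpa : q (p a) < p a) (hinner : Set.EqOn q p (Set.Ioo a (p a))) : q a = p a := by
  by_contra hne
  rcases lt_or_gt_of_ne hne with hlt | hgt
  · have h := hinner ⟨hqa, hlt⟩
    rw [hinvq] at h
    exact hne ((congrArg p h).trans (hinvp _)).symm
  · have hqpa_ne : q (p a) ≠ a := fun h => hne ((congrArg q h).symm.trans (hinvq _))
    rcases lt_or_gt_of_ne hqpa_ne with hlo | hhi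
    · exact hncq (q (p a)) a ⟨hlo, by rwa [hinvq], by rwa [hinvq]⟩
    · have h := hinner ⟨hhi, hqpa⟩
      rw [hinvq] at h
      exact hqpa_ne (hinvp.injective h).symm

def closerWord (p : α → α) : α → Bool := fun i => decide (p i < i)

theorem closerWord_apply_apply (hinv : Function.Involutive p) (hfix : ∀ i, p i ≠ i) (i : α) :
    closerWord p (p i) = !closerWord p i := by
  rcases (hfix i).lt_or_gt with h | h <;> simp [closerWord, hinv i, h, h.not_gt]

theorem toLex_closerWord_lt [WellFoundedLT α] (hinv : Function.Involutive p)
    (hfix : ∀ i, p i ≠ i) {o : α → Bool} (ho : ∀ i, o (p i) = !o i)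
    (hne : o ≠ closerWord p) :
    toLex (closerWord p) < toLex o := by
  obtain ⟨i, hi, hmin⟩ := wellFounded_lt.has_min {i | o i ≠ closerWord p i}
    (Function.ne_iff.1 hne)
  -- the first disagreement is at an opener, since it propagates to the partner
  have hopen : ¬ p i < i := fun h => hmin (p i) (by
    simpa [ho, closerWord_apply_apply hinv hfix] using hi) h
  have hwi : closerWord p i = false := by simpa [closerWord] using hopen
  have hoi : o i = true := by simpa [hwi] using hi
  exact ⟨i, fun j hj => of_not_not fun h => hmin j (Ne.symm h) hj, by simp [hwi, hoi]⟩

theorem eq_of_closerWord_eq [WellFoundedGT α] (hinvp : Function.Involutive p)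
    (hinvq : Function.Involutive q) (hfixp : ∀ i, p i ≠ i) (hfixq : ∀ i, q i ≠ i)
    (hncp : NonCrossing p) (hncq : NonCrossing q) (hw : closerWord p = closerWord q) :
    p = q := by
  have hclose : ∀ i, p i < i ↔ q i < i := fun i => by
    simpa [closerWord] using congrFun hw i
  have hopen : ∀ i, i < p i ↔ i < q i := fun i => by
    rw [← not_le, ← not_le, le_iff_lt_or_eq, le_iff_lt_or_eq, hclose]
    simp [hfixp i, hfixq i]
  have hcloser : ∀ d, q (p d) = p (p d) → q d = p d := fun d hpd => by
    rw [hinvp] at hpd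
    exact (congrArg q hpd).symm.trans (hinvq _)
  have hopeners : ∀ a, a < p a → q a = p a := by
    intro a
    -- the arcs nested in `(a, p a)` open to the right of `a`
    induction a using WellFoundedGT.induction with
    | _ a ih =>
      intro ha
      refine hncq.apply_eq_of_eqOn_Ioo hinvp hinvq ha ((hopen a).1 ha)
        ((hclose (p a)).1 (by rwa [hinvp])) fun d ⟨had, hdb⟩ => ?_
      rcases (hfixp d).lt_or_gt with hd | hd
      · exact hcloser d (ih (p d) (hncp.apply_mem_Ioo hinvp had hdb).1 (by rwa [hinvp]))
      · exact ih d had hd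
  funext a
  rcases (hfixp a).lt_or_gt with h | h
  · exact (hcloser a (hopeners (p a) (by rwa [hinvp]))).symm
  · exact (hopeners a h).symm

end NonCrossing

theorem stmt7_general (f : Type*) [Field f] (n : ℕ) :
    LinearIndependent f (tMatch (f := f) n) := by
  refine linearIndependent_of_triangular (fun G => coeffWord (closerWord G.1))
    (fun G => toLex (closerWord G.1)) (fun G => ?_) (fun G H hne hcoeff => ?_)
  · obtain ⟨p, hinv, hfix, -⟩ := G
    exact (coeffWord_tMatch_ne_zero_iff _ _).2 (closerWord_apply_apply hinv hfix)
  · obtain ⟨q, hinvq, hfixq, hncq⟩ := H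
    refine toLex_closerWord_lt hinvq hfixq ((coeffWord_tMatch_ne_zero_iff _ _).1 hcoeff) ?_
    obtain ⟨p, hinvp, hfixp, hncp⟩ := G
    exact fun hw => hne <| Subtype.ext <|
      eq_of_closerWord_eq hinvq hinvp hfixq hfixp hncq hncp hw.symm

/-- the family {t_G}, G ranging over non-crossing perfect
matchings of {1,...,2n}, is linearly independent in V^{⊗2n}. -/
theorem stmt7 (f : Type*) [Field f] [CharZero f] (n : ℕ) :
    LinearIndependent f (tMatch (f := f) n) :=
  stmt7_general f n
end

section
/- Let c_d be the number of non-crossing multigraphs (0-outerplanar graphs, multiple edges allowed, no loops) on vertices 1,...,m with degree sequence d = (d_1,...,d_m). Then c_d satisfies the recursion c_d = Σ_{j=|d_{m−1}−d_m|, step 2}^{d_{m−1}+d_m} c_{(d_1,...,d_{m−2}, j)} for m ≥ 2, with initial condition c_{(d)} = 1 if d = 0 and 0 otherwise. -/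
open Finset

/-- The number of non-crossing multigraphs (0-outerplanar graphs: multiple
edges allowed, no loops, vertices on a line, edges drawable in the upper
half-plane without crossings) on vertices Fin m with degree sequence d.
A multigraph is encoded by its symmetric multiplicity matrix A with zero
diagonal; non-crossing means there is no pattern a < b < c < e with an edge
between a,c and an edge between b,e. -/
noncomputable def ncCount (m : ℕ) (d : Fin m → ℕ) : ℕ :=
  Nat.card {A : Fin m → Fin m → ℕ //
    (∀ i j, A i j = A j i) ∧ (∀ i, A i i = 0) ∧
    (∀ a b c e : Fin m, a < b → b < c → c < e → A a c = 0 ∨ A b e = 0) ∧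
    ∀ i, ∑ j, A i j = d i}

/-!
Let `u < v` be the last two vertices and `k` the number of edges between them. Merging `u` and
`v` and discarding those `k` edges gives a non-crossing multigraph on one vertex fewer, in which
the merged vertex has degree `d_u + d_v - 2k`. Conversely, the edges at the merged vertex have to
be shared out between `u` and `v` so that every edge going to `v` starts to the left of every edge
going to `u`, since otherwise two of them cross; as `v` receives exactly `d_v - k` of them, there
is exactly one way to do this. Summing over `k`, or over `t = min d_u d_v - k`, gives the
recursion. On a single vertex the only loopless multigraph is the empty one.
-/

structure IsNCMultigraph {n : ℕ} (A : Fin n → Fin n → ℕ) : Prop where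
  symm : ∀ i j, A i j = A j i
  loopless : ∀ i, A i i = 0
  noncrossing : ∀ a b c e, a < b → b < c → c < e → A a c = 0 ∨ A b e = 0

abbrev NCMultigraph {n : ℕ} (d : Fin n → ℕ) : Type :=
  {A : Fin n → Fin n → ℕ // IsNCMultigraph A ∧ ∀ i, ∑ j, A i j = d i}

lemma ncCount_eq_card {n : ℕ} (d : Fin n → ℕ) : ncCount n d = Nat.card (NCMultigraph d) :=
  Nat.card_congr <| Equiv.subtypeEquivRight fun _ =>
    ⟨fun ⟨hs, hl, hc, hd⟩ => ⟨⟨hs, hl, hc⟩, hd⟩,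
      fun ⟨⟨hs, hl, hc⟩, hd⟩ => ⟨hs, hl, hc, hd⟩⟩

lemma le_of_sum_eq {n : ℕ} {A : Fin n → Fin n → ℕ} {d : Fin n → ℕ}
    (hd : ∀ i, ∑ j, A i j = d i) (i j : Fin n) : A i j ≤ d i :=
  hd i ▸ single_le_sum (fun _ _ => Nat.zero_le _) (mem_univ j)

instance {n : ℕ} (d : Fin n → ℕ) : Finite (NCMultigraph d) :=
  Set.Finite.to_subtype <| (Set.finite_Iic fun i _ => d i).subset fun _ hA =>
    le_of_sum_eq hA.2

lemma ncCount_one (d : Fin 1 → ℕ) : ncCount 1 d = if d 0 = 0 then 1 else 0 := by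
  have hzero (A : NCMultigraph d) : A.1 = 0 := funext₂ fun i j => by
    rw [Subsingleton.elim i 0, Subsingleton.elim j 0]
    exact A.2.1.loopless 0
  rw [ncCount_eq_card]
  split_ifs with h
  · refine Nat.card_eq_one_iff_unique.2
      ⟨⟨fun A B => Subtype.ext ((hzero A).trans (hzero B).symm)⟩, ⟨0, ?_, fun i => ?_⟩⟩
    · exact ⟨fun _ _ => rfl, fun _ => rfl, fun _ _ _ _ _ _ _ => Or.inl rfl⟩
    · simp [Subsingleton.elim i 0, h]
  · refine Nat.card_eq_zero.2 (Or.inl ⟨fun A => h ?_⟩)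
    rw [← A.2.2 0, hzero A]
    simp

section Border

variable {n : ℕ} {B : Fin n → Fin n → ℕ} {x : Fin n → ℕ} {c : ℕ}

/-- `B` with a new vertex `Fin.last n` attached, joined to `i` by `x i` edges, and `c` on the
diagonal. -/
def border (B : Fin n → Fin n → ℕ) (x : Fin n → ℕ) (c : ℕ) :
    Fin (n + 1) → Fin (n + 1) → ℕ :=
  Fin.lastCases (Fin.lastCases c x) fun i => Fin.lastCases (x i) (B i)

@[simp] lemma border_castSucc_castSucc (i j : Fin n) :
    border B x c i.castSucc j.castSucc = B i j := by
  simp [border]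

@[simp] lemma border_castSucc_last (i : Fin n) : border B x c i.castSucc (Fin.last n) = x i := by
  simp [border]

@[simp] lemma border_last_castSucc (j : Fin n) : border B x c (Fin.last n) j.castSucc = x j := by
  simp [border]

@[simp] lemma border_last_last : border B x c (Fin.last n) (Fin.last n) = c := by
  simp [border]

@[simp] lemma sum_border_castSucc (i : Fin n) :
    ∑ j, border B x c i.castSucc j = ∑ j, B i j + x i := by
  simp [Fin.sum_univ_castSucc]

@[simp] lemma sum_border_last : ∑ j, border B x c (Fin.last n) j = ∑ j, x j + c := by
  simp [Fin.sum_univ_castSucc]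

lemma eq_border (A : Fin (n + 1) → Fin (n + 1) → ℕ) (hA : ∀ i j, A i j = A j i) :
    A = border (fun i j => A i.castSucc j.castSucc) (fun i => A i.castSucc (Fin.last n))
      (A (Fin.last n) (Fin.last n)) := by
  funext i j
  induction i using Fin.lastCases <;> induction j using Fin.lastCases <;> simp [hA]

lemma IsNCMultigraph.exists_eq_border {A : Fin (n + 1) → Fin (n + 1) → ℕ}
    (hA : IsNCMultigraph A) : ∃ B x, A = border B x 0 :=
  ⟨_, _, (eq_border A hA.symm).trans (by rw [hA.loopless])⟩

lemma border_injective {B' : Fin n → Fin n → ℕ} {x' : Fin n → ℕ} {c' : ℕ}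
    (h : border B x c = border B' x' c') : B = B' ∧ x = x' := by
  refine ⟨funext₂ fun i j => ?_, funext fun i => ?_⟩
  · simpa using congr_fun₂ h i.castSucc j.castSucc
  · simpa using congr_fun₂ h i.castSucc (Fin.last n)

lemma isNCMultigraph_border_iff :
    IsNCMultigraph (border B x c) ↔
      IsNCMultigraph B ∧ c = 0 ∧ ∀ a b e, a < b → b < e → B a e = 0 ∨ x b = 0 := by
  constructor
  · rintro ⟨hs, hl, hc⟩
    refine ⟨⟨fun i j => by simpa using hs i.castSucc j.castSucc,
      fun i => by simpa using hl i.castSucc, fun a b c e hab hbc hce => ?_⟩,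
      by simpa using hl (Fin.last n), fun a b e hab hbe => ?_⟩
    · simpa using hc a.castSucc b.castSucc c.castSucc e.castSucc
        (by simpa) (by simpa) (by simpa)
    · simpa using hc a.castSucc b.castSucc e.castSucc (Fin.last n)
        (by simpa) (by simpa) (Fin.castSucc_lt_last e)
  · rintro ⟨hB, rfl, hx⟩
    refine ⟨fun i j => ?_, fun i => ?_, fun a b c e hab hbc hce => ?_⟩
    · induction i using Fin.lastCases <;> induction j using Fin.lastCases <;> simp [hB.symm]
    · induction i using Fin.lastCases <;> simp [hB.loopless]
    obtain ⟨a, rfl⟩ := Fin.exists_castSucc_eq.2 (Fin.ne_last_of_lt hab)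
    obtain ⟨b, rfl⟩ := Fin.exists_castSucc_eq.2 (Fin.ne_last_of_lt hbc)
    obtain ⟨c, rfl⟩ := Fin.exists_castSucc_eq.2 (Fin.ne_last_of_lt hce)
    rw [Fin.castSucc_lt_castSucc_iff] at hab hbc
    induction e using Fin.lastCases with
    | last => simpa using hx a b c hab hbc
    | cast e => simpa using hB.noncrossing a b c e hab hbc (by simpa using hce)

end Border

section Separated

lemma le_of_separated_of_sum_eq {ι : Type*} [LinearOrder ι] [Fintype ι] {x y x' y' : ι → ℕ}
    (hxy : x + y = x' + y') (hy : ∑ i, y i = ∑ i, y' i)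
    (h : ∀ a b, a < b → x a = 0 ∨ y b = 0) (h' : ∀ a b, a < b → x' a = 0 ∨ y' b = 0)
    (i : ι) :
    y' i ≤ y i := by
  by_contra! hi
  obtain ⟨j, -, hj⟩ : ∃ j ∈ univ, y' j < y j := by
    by_contra! hle
    exact hy.not_lt (sum_lt_sum hle ⟨i, mem_univ i, hi⟩)
  have hxi := congr_fun hxy i
  have hxj := congr_fun hxy j
  simp only [Pi.add_apply] at hxi hxj
  -- now `x i ≠ 0` and `x' j ≠ 0`, which rules out `y` after `i` and `y'` after `j`
  rcases lt_trichotomy i j with hij | rfl | hji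
  · have := h i j hij
    omega
  · omega
  · have := h' j i hji
    omega

lemma eq_of_separated_of_sum_eq {ι : Type*} [LinearOrder ι] [Fintype ι] {x y x' y' : ι → ℕ}
    (hxy : x + y = x' + y') (hy : ∑ i, y i = ∑ i, y' i)
    (h : ∀ a b, a < b → x a = 0 ∨ y b = 0) (h' : ∀ a b, a < b → x' a = 0 ∨ y' b = 0) :
    x = x' ∧ y = y' := by
  obtain rfl : y = y' := funext fun i => le_antisymm
    (le_of_separated_of_sum_eq hxy.symm hy.symm h' h i) (le_of_separated_of_sum_eq hxy hy h h' i)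
  exact ⟨add_right_cancel hxy, rfl⟩

lemma exists_separated_of_le_sum {n : ℕ} (g : Fin n → ℕ) (s : ℕ) (hs : s ≤ ∑ i, g i) :
    ∃ x y : Fin n → ℕ,
      x + y = g ∧ ∑ i, y i = s ∧ ∀ a b, a < b → x a = 0 ∨ y b = 0 := by
  induction n generalizing s with
  | zero => exact ⟨0, 0, Subsingleton.elim _ _, by simpa using (Nat.le_zero.1 hs).symm, nofun⟩
  | succ n ih =>
    rw [Fin.sum_univ_succ] at hs
    -- `y` greedily takes as much of `g 0` as it can, then recurses on the tail
    obtain ⟨x, y, hxy, hy, hsep⟩ :=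
      ih (Fin.tail g) (s - min (g 0) s) (by simp [Fin.tail]; omega)
    refine ⟨Fin.cons (g 0 - min (g 0) s) x, Fin.cons (min (g 0) s) y, ?_, ?_, fun a b hab => ?_⟩
    · funext i
      induction i using Fin.cases with
      | zero => simp
      | succ i => simpa [Fin.tail] using congr_fun hxy i
    · rw [Fin.sum_cons, hy]
      omega
    induction b using Fin.cases with
    | zero => exact absurd hab (Fin.not_lt_zero a)
    | succ b =>
      induction a using Fin.cases with
      | zero =>
        by_cases hg : g 0 ≤ s
        · simp [hg]
        · simp [sum_eq_zero_iff.1 (by omega : ∑ i, y i = 0) b (mem_univ b)]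
      | succ a => simpa using hsep a b (Fin.succ_lt_succ_iff.1 hab)

end Separated

section Contraction

variable {m : ℕ} {B : Fin m → Fin m → ℕ} {x y : Fin m → ℕ} {k : ℕ}

def contract (A : Fin (m + 2) → Fin (m + 2) → ℕ) : Fin (m + 1) → Fin (m + 1) → ℕ :=
  border (fun i j => A i.castSucc.castSucc j.castSucc.castSucc)
    (fun i => A i.castSucc.castSucc (Fin.last m).castSucc +
      A i.castSucc.castSucc (Fin.last (m + 1))) 0

@[simp] lemma contract_border_border :
    contract (border (border B x 0) (Fin.snoc y k) 0) = border B (x + y) 0 := by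
  simp [contract]
  rfl

lemma IsNCMultigraph.exists_eq_border_border {A : Fin (m + 2) → Fin (m + 2) → ℕ}
    (hA : IsNCMultigraph A) : ∃ B x y k, A = border (border B x 0) (Fin.snoc y k) 0 := by
  obtain ⟨A₁, z, rfl⟩ := hA.exists_eq_border
  obtain ⟨B, x, rfl⟩ := (isNCMultigraph_border_iff.1 hA).1.exists_eq_border
  exact ⟨B, x, Fin.init z, z (Fin.last m), by rw [Fin.snoc_init_self]⟩

lemma isNCMultigraph_border_border_iff :
    IsNCMultigraph (border (border B x 0) (Fin.snoc y k) 0) ↔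
      IsNCMultigraph (border B (x + y) 0) ∧ ∀ a b, a < b → x a = 0 ∨ y b = 0 := by
  have hlast (i : Fin (m + 1)) : ¬ Fin.last m < i := (Fin.le_last i).not_gt
  simp [isNCMultigraph_border_iff, Fin.forall_fin_succ', hlast, or_and_left, forall_and,
    and_assoc]

lemma sum_border_border_iff (d : Fin (m + 2) → ℕ) :
    (∀ i, ∑ j, border (border B x 0) (Fin.snoc y k) 0 i j = d i) ↔
      (∀ i, ∑ j, border B (x + y) 0 i j = (Fin.snoc (fun i => d i.castSucc.castSucc)
        (∑ i, x i + ∑ i, y i) : Fin (m + 1) → ℕ) i) ∧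
      ∑ i, x i + k = d (Fin.last m).castSucc ∧ ∑ i, y i + k = d (Fin.last (m + 1)) := by
  simp [Fin.forall_fin_succ', Fin.sum_snoc, sum_add_distrib, add_assoc, and_assoc]

lemma isNCMultigraph_sum_border_border_iff (d : Fin (m + 2) → ℕ) :
    (IsNCMultigraph (border (border B x 0) (Fin.snoc y k) 0) ∧
      ∀ i, ∑ j, border (border B x 0) (Fin.snoc y k) 0 i j = d i) ↔
    (IsNCMultigraph (border B (x + y) 0) ∧ ∀ i, ∑ j, border B (x + y) 0 i j =
        (Fin.snoc (fun i => d i.castSucc.castSucc) (∑ i, x i + ∑ i, y i) :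
          Fin (m + 1) → ℕ) i) ∧
      (∀ a b, a < b → x a = 0 ∨ y b = 0) ∧
      ∑ i, x i + k = d (Fin.last m).castSucc ∧ ∑ i, y i + k = d (Fin.last (m + 1)) := by
  rw [isNCMultigraph_border_border_iff, sum_border_border_iff]
  tauto

variable {d : Fin (m + 2) → ℕ}

lemma isNCMultigraph_sum_contract {A : Fin (m + 2) → Fin (m + 2) → ℕ} (hA : IsNCMultigraph A)
    (hd : ∀ i, ∑ j, A i j = d i) :
    IsNCMultigraph (contract A) ∧ ∀ i, ∑ j, contract A i j =
      (Fin.snoc (fun i => d i.castSucc.castSucc) (d (Fin.last m).castSucc + d (Fin.last (m + 1)) -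
        2 * A (Fin.last m).castSucc (Fin.last (m + 1))) : Fin (m + 1) → ℕ) i := by
  obtain ⟨B, x, y, k, rfl⟩ := hA.exists_eq_border_border
  obtain ⟨⟨hc, hcd⟩, -, hx, hy⟩ := (isNCMultigraph_sum_border_border_iff d).1 ⟨hA, hd⟩
  simp only [border_castSucc_last, Fin.snoc_last, contract_border_border]
  refine ⟨hc, ?_⟩
  convert hcd using 4
  omega

lemma eq_of_contract_eq {A₁ A₂ : Fin (m + 2) → Fin (m + 2) → ℕ}
    (hA₁ : IsNCMultigraph A₁ ∧ ∀ i, ∑ j, A₁ i j = d i)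
    (hA₂ : IsNCMultigraph A₂ ∧ ∀ i, ∑ j, A₂ i j = d i)
    (hk : A₁ (Fin.last m).castSucc (Fin.last (m + 1)) =
      A₂ (Fin.last m).castSucc (Fin.last (m + 1)))
    (hc : contract A₁ = contract A₂) : A₁ = A₂ := by
  obtain ⟨B₁, x₁, y₁, k₁, rfl⟩ := hA₁.1.exists_eq_border_border
  obtain ⟨B₂, x₂, y₂, k₂, rfl⟩ := hA₂.1.exists_eq_border_border
  obtain ⟨-, hsep₁, -, hy₁⟩ := (isNCMultigraph_sum_border_border_iff d).1 hA₁
  obtain ⟨-, hsep₂, -, hy₂⟩ := (isNCMultigraph_sum_border_border_iff d).1 hA₂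
  simp only [border_castSucc_last, Fin.snoc_last, contract_border_border] at hk hc
  obtain ⟨rfl, hxy⟩ := border_injective hc
  obtain ⟨rfl, rfl⟩ := eq_of_separated_of_sum_eq hxy (by omega) hsep₁ hsep₂
  rw [hk]

lemma exists_contract_eq {A' : Fin (m + 1) → Fin (m + 1) → ℕ} (hA' : IsNCMultigraph A')
    (hkp : k ≤ d (Fin.last m).castSucc) (hkq : k ≤ d (Fin.last (m + 1)))
    (hd : ∀ i, ∑ j, A' i j = (Fin.snoc (fun i => d i.castSucc.castSucc)
      (d (Fin.last m).castSucc + d (Fin.last (m + 1)) - 2 * k) : Fin (m + 1) → ℕ) i) :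
    ∃ A, (IsNCMultigraph A ∧ ∀ i, ∑ j, A i j = d i) ∧
      A (Fin.last m).castSucc (Fin.last (m + 1)) = k ∧ contract A = A' := by
  obtain ⟨B, g, rfl⟩ := hA'.exists_eq_border
  have hg := hd (Fin.last m)
  simp only [sum_border_last, Fin.snoc_last, add_zero] at hg
  obtain ⟨x, y, rfl, hy, hsep⟩ :=
    exists_separated_of_le_sum g (d (Fin.last (m + 1)) - k) (by omega)
  simp only [Pi.add_apply, sum_add_distrib] at hg
  refine ⟨border (border B x 0) (Fin.snoc y k) 0, (isNCMultigraph_sum_border_border_iff d).2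
      ⟨⟨hA', by rwa [← hg] at hd⟩, hsep, by omega, by omega⟩,
    by simp, contract_border_border⟩

lemma card_eq_sum_card_contract {p q : ℕ} (hp : d (Fin.last m).castSucc = p)
    (hq : d (Fin.last (m + 1)) = q) :
    Nat.card (NCMultigraph d) = ∑ t : Fin (min p q + 1), Nat.card (NCMultigraph
      (Fin.snoc (fun i : Fin m => d i.castSucc.castSucc) (max p q - min p q + 2 * (t : ℕ)) :
        Fin (m + 1) → ℕ)) := by
  have hk_le (A : NCMultigraph d) : A.1 (Fin.last m).castSucc (Fin.last (m + 1)) ≤ min p q :=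
    hp ▸ hq ▸ le_min (le_of_sum_eq A.2.2 _ _) (A.2.1.symm _ _ ▸ le_of_sum_eq A.2.2 _ _)
  have hdeg {k : ℕ} (hk : k ≤ min p q) :
      max p q - min p q + 2 * (min p q - k) =
        d (Fin.last m).castSucc + d (Fin.last (m + 1)) - 2 * k := by
    omega
  let Φ (A : NCMultigraph d) : Σ t : Fin (min p q + 1), NCMultigraph
      (Fin.snoc (fun i : Fin m => d i.castSucc.castSucc) (max p q - min p q + 2 * (t : ℕ)) :
        Fin (m + 1) → ℕ) :=
    ⟨⟨min p q - A.1 (Fin.last m).castSucc (Fin.last (m + 1)), by omega⟩, contract A.1,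
      by rw [hdeg (hk_le A)]; exact isNCMultigraph_sum_contract A.2.1 A.2.2⟩
  have hΦ : Function.Bijective Φ := by
    refine ⟨fun A₁ A₂ h => Subtype.ext ?_, fun ⟨t, A', hA'⟩ => ?_⟩
    · have hk := congrArg (fun s => (s.1 : ℕ)) h
      have := hk_le A₁
      have := hk_le A₂
      simp only [Φ] at hk
      exact eq_of_contract_eq A₁.2 A₂.2 (by omega) (congrArg (fun s => s.2.1) h)
    · have ht := t.isLt
      obtain ⟨A, hA, hk, hc⟩ := exists_contract_eq hA'.1 (d := d) (k := min p q - t)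
        (by omega) (by omega)
        (by rw [← hdeg (by omega), Nat.sub_sub_self (by omega)]; exact hA'.2)
      exact ⟨⟨A, hA⟩, Sigma.subtype_ext (Fin.ext (by simp only [Φ, hk]; omega)) hc⟩
  exact (Nat.card_eq_of_bijective Φ hΦ).trans Nat.card_sigma

end Contraction

theorem ncCount_add_two (m : ℕ) (d : Fin (m + 2) → ℕ) :
    ncCount (m + 2) d =
      ∑ t ∈ range (min (d (Fin.last m).castSucc) (d (Fin.last (m + 1))) + 1),
        ncCount (m + 1) (Fin.snoc (fun i : Fin m => d i.castSucc.castSucc)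
          (max (d (Fin.last m).castSucc) (d (Fin.last (m + 1))) -
            min (d (Fin.last m).castSucc) (d (Fin.last (m + 1))) + 2 * t)) := by
  rw [ncCount_eq_card, card_eq_sum_card_contract rfl rfl, ← Fin.sum_univ_eq_sum_range]
  simp only [ncCount_eq_card]

/-- c_d = Σ_{j=|d_{m−1}−d_m|, step 2}^{d_{m−1}+d_m}
c_{(d_1,...,d_{m−2},j)} for m ≥ 2, with c_{(d)} = 1 if d = 0 and 0 otherwise. -/
theorem stmt11 :
    (∀ (m : ℕ) (d : Fin (m + 2) → ℕ),
      ncCount (m + 2) d =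
        ∑ t ∈ Finset.range (min (d ⟨m, by omega⟩) (d ⟨m + 1, by omega⟩) + 1),
          ncCount (m + 1) (Fin.snoc (fun i : Fin m => d i.castSucc.castSucc)
            (max (d ⟨m, by omega⟩) (d ⟨m + 1, by omega⟩) -
              min (d ⟨m, by omega⟩) (d ⟨m + 1, by omega⟩) + 2 * t))) ∧
    (∀ d : Fin 1 → ℕ, ncCount 1 d = if d 0 = 0 then 1 else 0) :=
  ⟨ncCount_add_two, ncCount_one⟩
end

section
/- The number of non-crossing multigraphs on vertices 1,...,m with degree sequence (d_1,...,d_m) equals the multiplicity of the trivial representation in ρ_{d_1}⊗...⊗ρ_{d_m}, i.e. equals the coefficient c_d^{(0)} defined by Π_{i=1}^m(q^{d_i}+...+q^{−d_i}) = Σ_k c_d^{(k)}(q^k+q^{k−2}+...+q^{−k}). -/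
open LaurentPolynomial Finset

/-- The character of the irreducible SL(2)-representation ρ_d:
q^d + q^{d-2} + ... + q^{-d}. -/
noncomputable def chRho (k : ℕ) : LaurentPolynomial ℤ :=
  ∑ i ∈ Finset.range (k + 1), T ((k : ℤ) - 2 * i)

/-!
Let `N(m, d, k)` count the non-crossing multigraphs on `0, …, m` in which each `i < m` has degree
`d i` and the last vertex `m` has degree `k`, and let `c_k(P) = P_k - P_{k+2}` be the multiplicity
of `ρ_k` in an SL(2)-representation with character `P`. Both obey the Clebsch–Gordan recursion
`x(m + 1, k) = ∑_{l ≤ d_m, d_m ≤ k + l} x(m, k + 2l - d_m)` and agree for `m = 0`, hence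
`N(m, d, k) = c_k(∏_{i<m} ch ρ_{d_i})`; the theorem is the case `k = 0`.

On the graph side `l` is the number of edges from `m` to earlier vertices, and merging `m` with
the last vertex `m + 1` yields a graph counted by `N(m, d, k + 2l - d_m)`. The merge is undone by
splitting the edges at the merged vertex again: non-crossingness forces the `l` of them that
belong to `m` to be the ones coming from the highest-numbered vertices.
-/

noncomputable def sl2Mult (P : LaurentPolynomial ℤ) (k : ℕ) : ℤ :=
  P.coeff k - P.coeff (k + 2)

lemma sl2Mult_one (k : ℕ) : sl2Mult 1 k = if k = 0 then 1 else 0 := by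
  rw [sl2Mult, ← map_one C, C_apply, C_apply]
  split_ifs <;> omega

lemma coeff_mul_T (P : LaurentPolynomial ℤ) (a n : ℤ) :
    (P * T a).coeff n = P.coeff (n - a) := by
  simpa [sub_eq_add_neg] using AddMonoidAlgebra.coeff_mul_single_apply P (1 : ℤ) a n

lemma coeff_mul_chRho (P : LaurentPolynomial ℤ) (e : ℕ) (n : ℤ) :
    (P * chRho e).coeff n = ∑ i ∈ range (e + 1), P.coeff (n - e + 2 * i) := by
  rw [chRho, mul_sum, AddMonoidAlgebra.coeff_sum, Finsupp.finsetSum_apply]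
  exact sum_congr rfl fun i _ => by rw [coeff_mul_T]; ring_nf

lemma sl2Mult_mul_chRho_eq_sub (P : LaurentPolynomial ℤ) (e k : ℕ) :
    sl2Mult (P * chRho e) k = P.coeff ((k : ℤ) - e) - P.coeff (k + e + 2) := by
  have := sum_range_sub' (fun i : ℕ => P.coeff ((k : ℤ) - e + 2 * i)) (e + 1)
  simp only [sl2Mult, coeff_mul_chRho, ← sum_sub_distrib]
  convert this using 3 <;> push_cast <;> ring_nf

lemma invert_chRho (e : ℕ) : invert (chRho e) = chRho e := by
  rw [chRho, map_sum, ← sum_range_reflect]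
  refine sum_congr rfl fun j hj => ?_
  rw [invert_T, Nat.cast_sub (by simpa [Nat.lt_succ_iff] using hj)]
  push_cast
  ring_nf

lemma sl2Mult_mul_chRho {P : LaurentPolynomial ℤ} (hP : invert P = P) (e k : ℕ) :
    sl2Mult (P * chRho e) k =
      ∑ l ∈ range (e + 1), if e ≤ k + l then sl2Mult P (k + 2 * l - e) else 0 := by
  set f : ℕ → ℤ := fun l => P.coeff ((k : ℤ) + 2 * l - e)
  have hterm : ∀ l, e ≤ k + l → sl2Mult P (k + 2 * l - e) = f l - f (l + 1) := by
    intro l hl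
    simp only [sl2Mult, f]
    congr 2 <;> push_cast [Nat.cast_sub (by omega : e ≤ k + 2 * l)] <;> ring
  have hfilter : (range (e + 1)).filter (fun l => e ≤ k + l) = Ico (e - k) (e + 1) := by
    ext l; simp only [mem_filter, mem_range, mem_Ico]; omega
  have hsymm : f (e - k) = f 0 := by
    rcases le_total e k with h | h
    · rw [Nat.sub_eq_zero_of_le h]
    · simp only [f]
      nth_rewrite 1 [← hP]
      rw [invert_apply]
      congr 1
      push_cast [h]
      ring
  rw [← sum_filter, hfilter, sum_congr rfl fun l hl => hterm l (by simp at hl; omega),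
    sum_Ico_eq_sub _ (by omega), sum_range_sub', sum_range_sub', sl2Mult_mul_chRho_eq_sub, hsymm]
  simp only [sub_self, sub_zero, f]
  congr 2
  push_cast
  ring

structure IsNCGraph (m : ℕ) (d : ℕ → ℕ) (k : ℕ) (A : ℕ → ℕ → ℕ) : Prop where
  symm : ∀ i j, A i j = A j i
  diag : ∀ i, A i i = 0
  nonCrossing : ∀ a b c e, a < b → b < c → c < e → A a c = 0 ∨ A b e = 0
  eq_zero_of_lt : ∀ i j, m < j → A i j = 0
  degree : ∀ i < m, ∑ j ∈ range (m + 1), A i j = d i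
  degree_last : ∑ j ∈ range (m + 1), A m j = k

noncomputable def ncGraphCount (m : ℕ) (d : ℕ → ℕ) (k : ℕ) : ℕ :=
  Nat.card {A // IsNCGraph m d k A}

namespace IsNCGraph

variable {m k : ℕ} {d : ℕ → ℕ} {A : ℕ → ℕ → ℕ}

lemma eq_zero_of_lt_left (hA : IsNCGraph m d k A) {i : ℕ} (j : ℕ) (hi : m < i) : A i j = 0 := by
  rw [hA.symm]
  exact hA.eq_zero_of_lt j i hi

lemma apply_le_degree (hA : IsNCGraph m d k A) {i : ℕ} (hi : i < m) (j : ℕ) :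
    A i j ≤ d i := by
  rcases lt_or_ge m j with hj | hj
  · simp [hA.eq_zero_of_lt i j hj]
  · rw [← hA.degree i hi]
    exact single_le_sum (fun _ _ => Nat.zero_le _) (mem_range.mpr (by omega))

lemma apply_le_degree_last (hA : IsNCGraph m d k A) (j : ℕ) : A m j ≤ k := by
  rcases lt_or_ge m j with hj | hj
  · simp [hA.eq_zero_of_lt m j hj]
  · rw [← hA.degree_last]
    exact single_le_sum (fun _ _ => Nat.zero_le _) (mem_range.mpr (by omega))

lemma apply_le (hA : IsNCGraph m d k A) (i j : ℕ) : A i j ≤ ∑ t ∈ range m, d t + k := by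
  rcases lt_trichotomy i m with hi | rfl | hi
  · have := single_le_sum (fun t _ => Nat.zero_le (d t)) (mem_range.mpr hi)
    have := hA.apply_le_degree hi j
    omega
  · have := hA.apply_le_degree_last j
    omega
  · simp [hA.eq_zero_of_lt_left j hi]

lemma sum_range_apply_last (hA : IsNCGraph m d k A) : ∑ t ∈ range m, A t m = k := by
  rw [← hA.degree_last, sum_range_succ, hA.diag, add_zero]
  exact sum_congr rfl fun t _ => hA.symm t m

lemma eq_zero_of_zero (hA : IsNCGraph 0 d k A) : A = 0 := by
  ext i j
  rcases Nat.eq_zero_or_pos j with rfl | hj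
  · rcases Nat.eq_zero_or_pos i with rfl | hi
    · exact hA.diag 0
    · exact hA.eq_zero_of_lt_left 0 hi
  · exact hA.eq_zero_of_lt i j hj

lemma sum_range_add_apply_succ (hA : IsNCGraph (m + 1) d k A) :
    ∑ j ∈ range m, A m j + A m (m + 1) = d m := by
  rw [← hA.degree m (by omega), sum_range_succ, sum_range_succ, hA.diag, add_zero]

lemma sum_range_add_apply_last (hA : IsNCGraph (m + 1) d k A) :
    ∑ j ∈ range m, A (m + 1) j + A m (m + 1) = k := by
  rw [← hA.degree_last, sum_range_succ, sum_range_succ, hA.diag, add_zero, hA.symm m]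

lemma eq_zero_of_le (hA : IsNCGraph m d 0 A) {i j : ℕ}
    (h : m ≤ i ∨ m ≤ j) : A i j = 0 := by
  have hlast : ∀ i, A i m = 0 := fun i => by
    rcases lt_trichotomy i m with hi | rfl | hi
    · exact sum_eq_zero_iff.mp hA.sum_range_apply_last i (mem_range.mpr hi)
    · exact hA.diag i
    · exact hA.eq_zero_of_lt_left m hi
  rcases h with hi | hj
  · rcases eq_or_lt_of_le hi with rfl | hi
    · rw [hA.symm, hlast]
    · exact hA.eq_zero_of_lt_left j hi
  · rcases eq_or_lt_of_le hj with rfl | hj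
    · exact hlast i
    · exact hA.eq_zero_of_lt i j hj

end IsNCGraph

instance (m : ℕ) (d : ℕ → ℕ) (k : ℕ) : Finite {A // IsNCGraph m d k A} := by
  set N := ∑ t ∈ range m, d t + k
  refine Finite.of_injective (fun A (i j : Fin (m + 1)) =>
    (⟨A.1 i j, Nat.lt_succ_of_le (A.2.apply_le i j)⟩ : Fin (N + 1))) fun A B hAB => ?_
  ext i j
  rcases le_or_gt i m with hi | hi
  · rcases le_or_gt j m with hj | hj
    · simpa using congr_fun₂ hAB ⟨i, by omega⟩ ⟨j, by omega⟩
    · rw [A.2.eq_zero_of_lt i j hj, B.2.eq_zero_of_lt i j hj]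
  · rw [A.2.eq_zero_of_lt_left j hi, B.2.eq_zero_of_lt_left j hi]

lemma ncGraphCount_zero (d : ℕ → ℕ) (k : ℕ) :
    ncGraphCount 0 d k = if k = 0 then 1 else 0 := by
  have hzero : IsNCGraph 0 d 0 0 :=
    ⟨fun _ _ => rfl, fun _ => rfl, fun _ _ _ _ _ _ _ => Or.inl rfl, fun _ _ _ => rfl,
      fun _ h => absurd h (Nat.not_lt_zero _), by simp⟩
  split_ifs with hk
  · subst hk
    exact Nat.card_eq_one_iff_exists.mpr
      ⟨⟨0, hzero⟩, fun A => Subtype.ext A.2.eq_zero_of_zero⟩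
  · have : IsEmpty {A // IsNCGraph 0 d k A} :=
      ⟨fun A => hk (by simpa [A.2.eq_zero_of_zero] using A.2.degree_last.symm)⟩
    exact Nat.card_of_isEmpty

-- Places `l` units into the slots `i < m` of capacities `c i`, highest slots first.
def topFill (m l : ℕ) (c : ℕ → ℕ) (i : ℕ) : ℕ :=
  min (c i) (l - ∑ j ∈ Ico (i + 1) m, c j)

section topFill

variable {m l : ℕ} {c : ℕ → ℕ}

lemma topFill_le (i : ℕ) : topFill m l c i ≤ c i := min_le_left _ _

lemma topFill_eq_of_pos {i j : ℕ} (hij : i < j) (hjm : j < m) (hi : 0 < topFill m l c i) :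
    topFill m l c j = c j := by
  have hsplit := sum_Ico_consecutive c (show i + 1 ≤ j + 1 by omega) (show j + 1 ≤ m by omega)
  have hcj : c j ≤ ∑ t ∈ Ico (i + 1) (j + 1), c t :=
    single_le_sum (fun _ _ => Nat.zero_le _) (mem_Ico.mpr ⟨by omega, by omega⟩)
  simp only [topFill] at hi ⊢
  omega

lemma sum_Ico_topFill {t : ℕ} (ht : t ≤ m) :
    ∑ i ∈ Ico t m, topFill m l c i = min l (∑ i ∈ Ico t m, c i) := by
  induction hn : m - t generalizing t with
  | zero => simp [show m = t by omega]
  | succ n ih =>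
    have ht' : t < m := by omega
    have := ih (t := t + 1) ht' (by omega)
    rw [sum_eq_sum_Ico_succ_bot ht', sum_eq_sum_Ico_succ_bot ht', this, topFill]
    omega

lemma sum_range_topFill (hl : l ≤ ∑ i ∈ range m, c i) :
    ∑ i ∈ range m, topFill m l c i = l := by
  rw [range_eq_Ico] at hl ⊢
  rw [sum_Ico_topFill (Nat.zero_le m)]
  omega

lemma eq_topFill {x : ℕ → ℕ} (hxc : ∀ i < m, x i ≤ c i)
    (hsum : ∑ i ∈ range m, x i = l) (hfull : ∀ i j, i < j → j < m → 0 < x i → x j = c j)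
    {i : ℕ} (hi : i < m) : x i = topFill m l c i := by
  have hsplit : ∑ j ∈ range i, x j + x i + ∑ j ∈ Ico (i + 1) m, x j = l := by
    rw [← sum_range_succ, sum_range_add_sum_Ico _ (by omega), hsum]
  have hle : ∑ j ∈ Ico (i + 1) m, x j ≤ ∑ j ∈ Ico (i + 1) m, c j :=
    sum_le_sum fun j hj => hxc j (mem_Ico.mp hj).2
  have hupper :
      ∀ i' ≤ i, 0 < x i' → ∑ j ∈ Ico (i + 1) m, x j = ∑ j ∈ Ico (i + 1) m, c j :=
    fun i' hi' hpos => sum_congr rfl fun j hj => by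
      rw [mem_Ico] at hj
      exact hfull i' j (by omega) hj.2 hpos
  have hlower : 0 < ∑ j ∈ range i, x j →
      x i = c i ∧ ∑ j ∈ Ico (i + 1) m, x j = ∑ j ∈ Ico (i + 1) m, c j := by
    intro hpos
    obtain ⟨j, hj, hxj⟩ := sum_pos_iff.mp hpos
    rw [mem_range] at hj
    exact ⟨hfull j i hj hi hxj, hupper j hj.le hxj⟩
  have := hupper i le_rfl
  have := hxc i hi
  unfold topFill
  omega

end topFill

lemma ext_of_symm {F G : ℕ → ℕ → ℕ} (hF : ∀ i j, F i j = F j i)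
    (hG : ∀ i j, G i j = G j i)    (h : ∀ i j, i ≤ j → F i j = G i j) : F = G := by
  funext i j
  rcases le_total i j with hij | hij
  · exact h i j hij
  · rw [hF, hG, h j i hij]

def mergeLast (m : ℕ) (A : ℕ → ℕ → ℕ) (i j : ℕ) : ℕ :=
  if i < m ∧ j < m then A i j
  else if i < m ∧ j = m then A i m + A i (m + 1)
  else if i = m ∧ j < m then A m j + A (m + 1) j
  else 0

section mergeLast

variable {m : ℕ} (A : ℕ → ℕ → ℕ) {i j : ℕ}

lemma mergeLast_of_lt (hi : i < m) (hj : j < m) : mergeLast m A i j = A i j := by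
  simp [mergeLast, hi, hj]

lemma mergeLast_left (hi : i < m) : mergeLast m A i m = A i m + A i (m + 1) := by
  simp [mergeLast, hi]

lemma mergeLast_right (hj : j < m) : mergeLast m A m j = A m j + A (m + 1) j := by
  simp [mergeLast, hj]

lemma mergeLast_eq_zero (h : i = m ∧ j = m ∨ m < i ∨ m < j) : mergeLast m A i j = 0 := by
  unfold mergeLast
  split_ifs <;> omega

lemma mergeLast_symm (hA : ∀ i j, A i j = A j i) (i j : ℕ) :
    mergeLast m A i j = mergeLast m A j i := by
  unfold mergeLast
  split_ifs <;> first | omega | simp_all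

end mergeLast

namespace IsNCGraph

variable {m k : ℕ} {d : ℕ → ℕ} {A : ℕ → ℕ → ℕ}

lemma mergeLast_nonCrossing (hA : IsNCGraph (m + 1) d k A) {a b c e : ℕ}
    (hab : a < b) (hbc : b < c) (hce : c < e) :
    mergeLast m A a c = 0 ∨ mergeLast m A b e = 0 := by
  rcases lt_trichotomy e m with he | rfl | he
  · rw [mergeLast_of_lt A (by omega) (by omega), mergeLast_of_lt A (by omega) he]
    exact hA.nonCrossing a b c e hab hbc hce
  · rw [mergeLast_of_lt A (by omega) hce, mergeLast_left A (by omega), Nat.add_eq_zero_iff]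
    have := hA.nonCrossing a b c e hab hbc hce
    have := hA.nonCrossing a b c (e + 1) hab hbc (by omega)
    tauto
  · exact Or.inr (mergeLast_eq_zero A (by omega))

lemma mergeLast (hA : IsNCGraph (m + 1) d k A) :
    IsNCGraph m d (k + 2 * ∑ j ∈ range m, A m j - d m) (mergeLast m A) where
  symm := mergeLast_symm A hA.symm
  diag i := by
    rcases lt_or_ge i m with hi | hi
    · rw [mergeLast_of_lt A hi hi, hA.diag]
    · exact mergeLast_eq_zero A (by omega)
  nonCrossing _ _ _ _ := hA.mergeLast_nonCrossing
  eq_zero_of_lt _ _ hj := mergeLast_eq_zero A (by omega)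
  degree i hi := by
    rw [sum_range_succ, mergeLast_left A hi, ← hA.degree i (by omega), sum_range_succ,
      sum_range_succ, sum_congr rfl fun j hj => mergeLast_of_lt A hi (mem_range.mp hj), add_assoc]
  degree_last := by
    rw [sum_range_succ, mergeLast_eq_zero A (by omega),
      sum_congr rfl fun j hj => mergeLast_right A (mem_range.mp hj), sum_add_distrib]
    have := hA.sum_range_add_apply_succ
    have := hA.sum_range_add_apply_last
    omega

end IsNCGraph

def splitLast (m l r : ℕ) (B : ℕ → ℕ → ℕ) (i j : ℕ) : ℕ :=
  if i < m ∧ j < m then B i j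
  else if i < m ∧ j = m then topFill m l (B · m) i
  else if i = m ∧ j < m then topFill m l (B · m) j
  else if i < m ∧ j = m + 1 then B i m - topFill m l (B · m) i
  else if i = m + 1 ∧ j < m then B j m - topFill m l (B · m) j
  else if i = m ∧ j = m + 1 ∨ i = m + 1 ∧ j = m then r
  else 0

section splitLast

variable {m l r : ℕ} (B : ℕ → ℕ → ℕ) {i j : ℕ}

lemma splitLast_of_lt (hi : i < m) (hj : j < m) : splitLast m l r B i j = B i j := by
  simp [splitLast, hi, hj]

lemma splitLast_left (hi : i < m) : splitLast m l r B i m = topFill m l (B · m) i := by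
  simp [splitLast, hi]

lemma splitLast_left_succ (hi : i < m) :
    splitLast m l r B i (m + 1) = B i m - topFill m l (B · m) i := by
  simp [splitLast, hi, hi.ne]

lemma splitLast_last : splitLast m l r B m (m + 1) = r := by
  simp [splitLast]

lemma splitLast_eq_zero (h : i = j ∧ m ≤ i ∨ m + 1 < j) : splitLast m l r B i j = 0 := by
  unfold splitLast
  split_ifs <;> omega

lemma splitLast_symm (hB : ∀ i j, B i j = B j i) (i j : ℕ) :
    splitLast m l r B i j = splitLast m l r B j i := by
  unfold splitLast
  split_ifs <;> first | omega | simp_all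

end splitLast

namespace IsNCGraph

variable {m k a l : ℕ} {d : ℕ → ℕ} {B : ℕ → ℕ → ℕ}

lemma splitLast_nonCrossing (hB : IsNCGraph m d a B) (r : ℕ) {p q s t : ℕ}
    (hpq : p < q) (hqs : q < s) (hst : s < t) :
    splitLast m l r B p s = 0 ∨ splitLast m l r B q t = 0 := by
  have hx := topFill_le (m := m) (l := l) (c := (B · m)) q
  rcases lt_or_ge s m with hs | hs
  · rw [splitLast_of_lt B (by omega) hs]
    rcases lt_trichotomy t m with ht | rfl | ht
    · rw [splitLast_of_lt B (by omega) ht]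
      exact hB.nonCrossing p q s t hpq hqs hst
    · rw [splitLast_left B (by omega)]
      have := hB.nonCrossing p q s t hpq hqs hst
      omega
    · rcases eq_or_lt_of_le (show m + 1 ≤ t by omega) with rfl | ht
      · rw [splitLast_left_succ B (by omega)]
        have := hB.nonCrossing p q s m hpq hqs hs
        omega
      · exact Or.inr (splitLast_eq_zero B (by omega))
  · rcases eq_or_lt_of_le hs with rfl | hs
    · rcases eq_or_lt_of_le (show m + 1 ≤ t by omega) with rfl | ht
      · rw [splitLast_left B (by omega), splitLast_left_succ B (by omega)]
        by_contra! h
        have := topFill_eq_of_pos hpq (by omega) (Nat.pos_of_ne_zero h.1)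
        omega
      · exact Or.inr (splitLast_eq_zero B (by omega))
    · exact Or.inr (splitLast_eq_zero B (by omega))

lemma splitLast (hB : IsNCGraph m d (k + 2 * l - d m) B) (hl : l ≤ d m) (hlk : d m ≤ k + l) :
    IsNCGraph (m + 1) d k (splitLast m l (d m - l) B) := by
  have hsum : ∑ t ∈ range m, topFill m l (B · m) t = l :=
    sum_range_topFill (by rw [hB.sum_range_apply_last]; omega)
  have hx := topFill_le (m := m) (l := l) (c := (B · m))
  have hcol := hB.sum_range_apply_last
  have hsymm := splitLast_symm (m := m) (l := l) (r := d m - l) B hB.symm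
  refine ⟨hsymm, fun i => ?_, fun _ _ _ _ => hB.splitLast_nonCrossing _,
    fun _ _ hj => splitLast_eq_zero B (by omega), fun i hi => ?_, ?_⟩
  · rcases lt_or_ge i m with hi | hi
    · rw [splitLast_of_lt B hi hi, hB.diag]
    · exact splitLast_eq_zero B (by omega)
  · rw [sum_range_succ, sum_range_succ]
    rcases Nat.lt_succ_iff_lt_or_eq.mp hi with hi | rfl
    · rw [sum_congr rfl fun j hj => splitLast_of_lt B hi (mem_range.mp hj), splitLast_left B hi,
        splitLast_left_succ B hi, ← hB.degree i hi, sum_range_succ]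
      have := hx i
      omega
    · rw [sum_congr rfl fun j hj => (hsymm _ _).trans (splitLast_left B (mem_range.mp hj)), hsum,
        splitLast_eq_zero B (by omega), splitLast_last]
      omega
  · rw [sum_range_succ, sum_range_succ, hsymm, splitLast_last, splitLast_eq_zero B (by omega),
      sum_congr rfl fun j hj => (hsymm _ _).trans (splitLast_left_succ B (mem_range.mp hj)),
      sum_tsub_distrib _ fun j _ => hx j, hcol, hsum]
    omega

end IsNCGraph

lemma mergeLast_splitLast {m a l r : ℕ} {d : ℕ → ℕ} {B : ℕ → ℕ → ℕ}
    (hB : IsNCGraph m d a B) :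
    mergeLast m (splitLast m l r B) = B := by
  refine ext_of_symm (mergeLast_symm _ (splitLast_symm B hB.symm)) hB.symm fun i j hij => ?_
  rcases lt_or_ge j m with hj | hj
  · rw [mergeLast_of_lt _ (by omega) hj, splitLast_of_lt B (by omega) hj]
  rcases eq_or_lt_of_le hj with rfl | hj
  · rcases eq_or_lt_of_le hij with rfl | hi
    · rw [mergeLast_eq_zero _ (by omega), hB.diag]
    · rw [mergeLast_left _ hi, splitLast_left B hi, splitLast_left_succ B hi]
      have := topFill_le (m := m) (l := l) (c := (B · m)) i
      omega
  · rw [mergeLast_eq_zero _ (by omega), hB.eq_zero_of_lt i j hj]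

lemma splitLast_mergeLast {m k : ℕ} {d : ℕ → ℕ} {A : ℕ → ℕ → ℕ}
    (hA : IsNCGraph (m + 1) d k A) :
    splitLast m (∑ j ∈ range m, A m j) (d m - ∑ j ∈ range m, A m j) (mergeLast m A) =
      A := by
  have hfill : ∀ t < m, topFill m (∑ j ∈ range m, A m j) (mergeLast m A · m) t = A t m := by
    refine fun t ht =>
      (eq_topFill (x := (A · m)) (fun i hi => ?_) ?_ (fun i j hij hj hpos => ?_) ht).symm
    · simp [mergeLast_left A hi]
    · exact sum_congr rfl fun j _ => hA.symm j m
    · have := hA.nonCrossing i j m (m + 1) hij hj (by omega)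
      simp only [mergeLast_left A hj]
      omega
  refine ext_of_symm (splitLast_symm _ (mergeLast_symm A hA.symm)) hA.symm fun i j hij => ?_
  rcases lt_or_ge j m with hj | hj
  · rw [splitLast_of_lt _ (by omega) hj, mergeLast_of_lt A (by omega) hj]
  rcases eq_or_lt_of_le hj with rfl | hj
  · rcases eq_or_lt_of_le hij with rfl | hi
    · rw [splitLast_eq_zero _ (by omega), hA.diag]
    · rw [splitLast_left _ hi, hfill i hi]
  rcases eq_or_lt_of_le (show m + 1 ≤ j by omega) with rfl | hj
  · rcases lt_trichotomy i m with hi | rfl | hi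
    · rw [splitLast_left_succ _ hi, hfill i hi, mergeLast_left A hi]
      omega
    · rw [splitLast_last]
      have := hA.sum_range_add_apply_succ
      omega
    · rw [splitLast_eq_zero _ (by omega), show i = m + 1 by omega, hA.diag]
  · rw [splitLast_eq_zero _ (by omega), hA.eq_zero_of_lt i j (by omega)]

lemma Nat.card_eq_sum_card_fiber {α : Type*} [Finite α] {g : α → ℕ} {n : ℕ}
    (hg : ∀ a, g a < n) :
    Nat.card α = ∑ l ∈ range n, Nat.card {a // g a = l} := by
  classical
  cases nonempty_fintype α
  simp only [Nat.card_eq_fintype_card, Fintype.card_subtype]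
  exact card_eq_sum_card_fiberwise fun a _ => mem_range.mpr (hg a)

lemma card_isNCGraph_sum_range_eq {m k l : ℕ} {d : ℕ → ℕ} (hl : l ≤ d m) :
    Nat.card {A // IsNCGraph (m + 1) d k A ∧ ∑ j ∈ range m, A m j = l} =
      if d m ≤ k + l then ncGraphCount m d (k + 2 * l - d m) else 0 := by
  split_ifs with hlk
  · refine Nat.card_congr
      { toFun := fun ⟨A, hA, hsum⟩ => ⟨mergeLast m A, hsum ▸ hA.mergeLast⟩
        invFun B := ⟨splitLast m l (d m - l) B.1, B.2.splitLast hl hlk, ?_⟩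
        left_inv := fun ⟨A, hA, hsum⟩ => Subtype.ext (hsum ▸ splitLast_mergeLast hA)
        right_inv B := Subtype.ext (mergeLast_splitLast B.2) }
    have := (B.2.splitLast hl hlk).sum_range_add_apply_succ
    rw [splitLast_last] at this
    omega
  · have : IsEmpty {A // IsNCGraph (m + 1) d k A ∧ ∑ j ∈ range m, A m j = l} := by
      refine ⟨fun ⟨A, hA, hsum⟩ => hlk ?_⟩
      have := hA.sum_range_add_apply_succ
      have := hA.apply_le_degree_last m
      rw [hA.symm] at this
      omega
    exact Nat.card_of_isEmpty

lemma ncGraphCount_succ (m : ℕ) (d : ℕ → ℕ) (k : ℕ) :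
    ncGraphCount (m + 1) d k = ∑ l ∈ range (d m + 1),
      if d m ≤ k + l then ncGraphCount m d (k + 2 * l - d m) else 0 := by
  rw [ncGraphCount, Nat.card_eq_sum_card_fiber (g := fun A => ∑ j ∈ range m, A.1 m j)
    fun A => Nat.lt_succ_of_le (A.2.sum_range_add_apply_succ ▸ Nat.le_add_right _ _)]
  refine sum_congr rfl fun l hl => ?_
  rw [← card_isNCGraph_sum_range_eq (Nat.lt_succ_iff.mp (mem_range.mp hl))]
  exact Nat.card_congr (Equiv.subtypeSubtypeEquivSubtypeInter (IsNCGraph (m + 1) d k)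
    fun A => ∑ j ∈ range m, A m j = l)

lemma ncGraphCount_eq_sl2Mult (d : ℕ → ℕ) (m k : ℕ) :
    (ncGraphCount m d k : ℤ) = sl2Mult (∏ i ∈ range m, chRho (d i)) k := by
  induction m generalizing k with
  | zero =>
    rw [ncGraphCount_zero, prod_range_zero, sl2Mult_one]
    split_ifs <;> rfl
  | succ m ih =>
    have hsymm : invert (∏ i ∈ range m, chRho (d i)) = ∏ i ∈ range m, chRho (d i) := by
      rw [map_prod]
      exact prod_congr rfl fun i _ => invert_chRho (d i)
    rw [ncGraphCount_succ, prod_range_succ, sl2Mult_mul_chRho hsymm]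
    push_cast
    exact sum_congr rfl fun l _ => by split_ifs <;> simp [ih]

def zeroExtend {m : ℕ} (A : Fin m → Fin m → ℕ) (i j : ℕ) : ℕ :=
  if h : i < m ∧ j < m then A ⟨i, h.1⟩ ⟨j, h.2⟩ else 0

@[simp]
lemma zeroExtend_coe {m : ℕ} (A : Fin m → Fin m → ℕ) (i j : Fin m) :
    zeroExtend A i j = A i j := by
  simp [zeroExtend]

lemma zeroExtend_of_le {m : ℕ} (A : Fin m → Fin m → ℕ) {i j : ℕ}
    (h : m ≤ i ∨ m ≤ j) :
    zeroExtend A i j = 0 := by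
  simp only [zeroExtend]
  rw [dif_neg (by omega)]

lemma sum_range_zeroExtend {m : ℕ} (A : Fin m → Fin m → ℕ) (i : Fin m) :
    ∑ j ∈ range (m + 1), zeroExtend A i j = ∑ j, A i j := by
  rw [sum_range_succ, zeroExtend_of_le A (Or.inr le_rfl), add_zero, ← Fin.sum_univ_eq_sum_range]
  simp

lemma isNCGraph_zeroExtend {m : ℕ} {d : Fin m → ℕ} {A : Fin m → Fin m → ℕ}
    (hsymm : ∀ i j, A i j = A j i) (hdiag : ∀ i, A i i = 0)
    (hnc : ∀ a b c e : Fin m, a < b → b < c → c < e → A a c = 0 ∨ A b e = 0)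
    (hdeg : ∀ i, ∑ j, A i j = d i) :
    IsNCGraph m (fun i => if h : i < m then d ⟨i, h⟩ else 0) 0 (zeroExtend A) where
  symm i j := by
    by_cases h : i < m ∧ j < m
    · simpa [zeroExtend, h] using hsymm _ _
    · rw [zeroExtend_of_le A (by omega), zeroExtend_of_le A (by omega)]
  diag i := by
    by_cases h : i < m
    · simpa [zeroExtend, h] using hdiag _
    · exact zeroExtend_of_le A (by omega)
  nonCrossing a b c e hab hbc hce := by
    by_cases he : e < m
    · simpa [zeroExtend, he, show a < m by omega, show b < m by omega, show c < m by omega]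
        using hnc ⟨a, by omega⟩ ⟨b, by omega⟩ ⟨c, by omega⟩ ⟨e, he⟩ hab hbc hce
    · exact Or.inr (zeroExtend_of_le A (by omega))
  eq_zero_of_lt _ _ hj := zeroExtend_of_le A (by omega)
  degree i hi := by
    simpa [hi] using (sum_range_zeroExtend A ⟨i, hi⟩).trans (hdeg _)
  degree_last := sum_eq_zero fun _ _ => zeroExtend_of_le A (Or.inl le_rfl)

lemma ncCount_eq_ncGraphCount (m : ℕ) (d : Fin m → ℕ) :
    ncCount m d = ncGraphCount m (fun i => if h : i < m then d ⟨i, h⟩ else 0) 0 := by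
  refine Nat.card_congr
    { toFun A := ⟨zeroExtend A.1, isNCGraph_zeroExtend A.2.1 A.2.2.1 A.2.2.2.1 A.2.2.2.2⟩
      invFun B := ⟨fun i j => B.1 i j, fun i j => B.2.symm i j, fun i => B.2.diag i,
        fun a b c e => B.2.nonCrossing a b c e, fun i => ?_⟩
      left_inv A := by ext; simp
      right_inv B := ?_ }
  · have := B.2.degree i i.2
    rw [sum_range_succ, B.2.eq_zero_of_le (Or.inr le_rfl), add_zero,
      ← Fin.sum_univ_eq_sum_range] at this
    simpa using this
  · ext i j
    by_cases h : i < m ∧ j < m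
    · simp [zeroExtend, h]
    · exact (zeroExtend_of_le _ (by omega)).trans (B.2.eq_zero_of_le (by omega)).symm

/-- the number of non-crossing multigraphs with degree sequence
(d_1,...,d_m) equals the multiplicity c_d^{(0)} of the trivial representation
in ρ_{d_1}⊗⋯⊗ρ_{d_m}, i.e. the difference of the coefficients of q^0 and q^2
in Π_i ch ρ_{d_i}. -/
theorem stmt12 (m : ℕ) (d : Fin m → ℕ) :
    (ncCount m d : ℤ) =
      (∏ i : Fin m, chRho (d i)).coeff 0 - (∏ i : Fin m, chRho (d i)).coeff 2 := by
  rw [ncCount_eq_ncGraphCount, ncGraphCount_eq_sl2Mult, ← Fin.prod_univ_eq_prod_range]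
  simp [sl2Mult]
end

section
/- For nonnegative integers a,b,c with d_1 = a+b, d_2 = a+c, d_3 = b+c, the element ((x∧y)^a ⊗ 1)·(x⊗1⊗y − y⊗1⊗x)^b·(1⊗(x∧y)^c) of S^{d_1}V ⊗ S^{d_2}V ⊗ S^{d_3}V is a nonzero SL(2)-invariant. -/
open Finset MvPolynomial

/-- f[x,y]^{⊗3} is the polynomial ring in variables (0,i) = x_i, (1,i) = y_i
(i = 0,1,2); SL(2) acts by the simultaneous change of variables
x ↦ a x + c y, y ↦ b x + d y in every tensor factor. -/
noncomputable def sl2Act {f : Type*} [Field f] {m : ℕ}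
    (g : Matrix.SpecialLinearGroup (Fin 2) f) :
    MvPolynomial (Fin 2 × Fin m) f →ₐ[f] MvPolynomial (Fin 2 × Fin m) f :=
  MvPolynomial.aeval fun v =>
    ∑ k : Fin 2, MvPolynomial.C ((g : Matrix (Fin 2) (Fin 2) f) k v.1) * X (k, v.2)

/-- Powers of weighted homogeneous polynomials are weighted homogeneous. -/
lemma IWH_pow {σ M R : Type*} [AddCommMonoid M] [CommSemiring R] {w : σ → M}
    {φ : MvPolynomial σ R} {m : M} (h : MvPolynomial.IsWeightedHomogeneous w φ m) (n : ℕ) :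
    MvPolynomial.IsWeightedHomogeneous w (φ ^ n) (n • m) := by
  induction n with
  | zero => simpa using isWeightedHomogeneous_one R w
  | succ k ih =>
      rw [pow_succ, succ_nsmul]
      exact ih.mul h

/-- Difference of weighted homogeneous polynomials of equal degree. -/
lemma IWH_sub {σ M : Type*} [AddCommMonoid M] {R : Type*} [CommRing R] {w : σ → M}
    {φ ψ : MvPolynomial σ R} {m : M} (hφ : MvPolynomial.IsWeightedHomogeneous w φ m)
    (hψ : MvPolynomial.IsWeightedHomogeneous w ψ m) :
    MvPolynomial.IsWeightedHomogeneous w (φ - ψ) m := by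
  rw [← mem_weightedHomogeneousSubmodule] at hφ hψ ⊢
  exact Submodule.sub_mem _ hφ hψ

/-- The weight of a monomial for the indicator weight of column `i`. -/
lemma weight_col (i : Fin 3) (mo : Fin 2 × Fin 3 →₀ ℕ) :
    Finsupp.weight (fun v : Fin 2 × Fin 3 => if v.2 = i then 1 else 0) mo
      = mo (0, i) + mo (1, i) := by
  rw [Finsupp.weight_apply, Finsupp.sum_fintype _ _ (by intro v; simp)]
  rw [Fintype.sum_prod_type, Fin.sum_univ_two]
  fin_cases i <;> simp [Fin.sum_univ_three]

/-- Brackets are weighted homogeneous. -/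
lemma IWH_bracket {f : Type*} [Field f] (w : Fin 2 × Fin 3 → ℕ) (i j : Fin 3)
    (h1 : w (0, i) + w (1, j) = w (1, i) + w (0, j)) :
    MvPolynomial.IsWeightedHomogeneous w
      ((X (0, i) * X (1, j) - X (1, i) * X (0, j) : MvPolynomial (Fin 2 × Fin 3) f))
      (w (0, i) + w (1, j)) := by
  apply IWH_sub
  · exact (isWeightedHomogeneous_X f w (0, i)).mul (isWeightedHomogeneous_X f w (1, j))
  · rw [h1]
    exact (isWeightedHomogeneous_X f w (1, i)).mul (isWeightedHomogeneous_X f w (0, j))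

lemma sl2Act_bracket {f : Type*} [Field f] (g : Matrix.SpecialLinearGroup (Fin 2) f)
    (i j : Fin 3) :
    sl2Act g ((X (0, i) * X (1, j) - X (1, i) * X (0, j) : MvPolynomial (Fin 2 × Fin 3) f)) =
      X (0, i) * X (1, j) - X (1, i) * X (0, j) := by
  have hdet : (g : Matrix (Fin 2) (Fin 2) f) 0 0 * (g : Matrix (Fin 2) (Fin 2) f) 1 1
      - (g : Matrix (Fin 2) (Fin 2) f) 0 1 * (g : Matrix (Fin 2) (Fin 2) f) 1 0 = 1 := by
    have := g.property
    rwa [Matrix.det_fin_two] at this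
  have hdet' : (C ((g : Matrix (Fin 2) (Fin 2) f) 0 0) * C ((g : Matrix (Fin 2) (Fin 2) f) 1 1)
      - C ((g : Matrix (Fin 2) (Fin 2) f) 0 1) * C ((g : Matrix (Fin 2) (Fin 2) f) 1 0)
        : MvPolynomial (Fin 2 × Fin 3) f) = 1 := by
    rw [← C_mul, ← C_mul, ← C_sub, hdet, C_1]
  simp only [sl2Act, map_sub, map_mul, aeval_X, Fin.sum_univ_two]
  linear_combination (X (0, i) * X (1, j) - X (1, i) * X (0, j) :
    MvPolynomial (Fin 2 × Fin 3) f) * hdet'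

/-- for d_1 = a+b, d_2 = a+c, d_3 = b+c, the element
((x∧y)^a ⊗ 1)·(x⊗1⊗y − y⊗1⊗x)^b·(1⊗(x∧y)^c)
= (x_0 y_1 − y_0 x_1)^a (x_0 y_2 − y_0 x_2)^b (x_1 y_2 − y_1 x_2)^c
of S^{d_1}V ⊗ S^{d_2}V ⊗ S^{d_3}V is a nonzero SL(2)-invariant. -/
theorem stmt16 (f : Type*) [Field f] [CharZero f] (a b c : ℕ) :
    (((X (0, 0) * X (1, 1) - X (1, 0) * X (0, 1)) ^ a *
      (X (0, 0) * X (1, 2) - X (1, 0) * X (0, 2)) ^ b *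
      (X (0, 1) * X (1, 2) - X (1, 1) * X (0, 2)) ^ c :
        MvPolynomial (Fin 2 × Fin 3) f) ≠ 0) ∧
    (∀ mo ∈ ((X (0, 0) * X (1, 1) - X (1, 0) * X (0, 1)) ^ a *
      (X (0, 0) * X (1, 2) - X (1, 0) * X (0, 2)) ^ b *
      (X (0, 1) * X (1, 2) - X (1, 1) * X (0, 2)) ^ c :
        MvPolynomial (Fin 2 × Fin 3) f).support,
      (mo (0, 0) + mo (1, 0) = a + b) ∧ (mo (0, 1) + mo (1, 1) = a + c) ∧
        (mo (0, 2) + mo (1, 2) = b + c)) ∧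
    (∀ g : Matrix.SpecialLinearGroup (Fin 2) f,
      sl2Act g (((X (0, 0) * X (1, 1) - X (1, 0) * X (0, 1)) ^ a *
        (X (0, 0) * X (1, 2) - X (1, 0) * X (0, 2)) ^ b *
        (X (0, 1) * X (1, 2) - X (1, 1) * X (0, 2)) ^ c :
          MvPolynomial (Fin 2 × Fin 3) f)) =
      (X (0, 0) * X (1, 1) - X (1, 0) * X (0, 1)) ^ a *
        (X (0, 0) * X (1, 2) - X (1, 0) * X (0, 2)) ^ b *
        (X (0, 1) * X (1, 2) - X (1, 1) * X (0, 2)) ^ c) := by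
  refine ⟨?_, ?_, ?_⟩
  · -- nonzero: evaluate at x = (1, 0, -1), y = (0, 1, 1)
    set ev : Fin 2 × Fin 3 → f := fun v =>
      if v.1 = 0 then (if v.2 = 0 then 1 else if v.2 = 1 then 0 else -1)
      else if v.2 = 0 then 0 else 1 with hev
    intro h0
    have h1 := congrArg (eval ev) h0
    simp only [map_mul, map_pow, map_sub, eval_X, map_zero] at h1
    norm_num [hev, (show (2:Fin 3) ≠ 0 by decide), (show (2:Fin 3) ≠ 1 by decide),
      (show (1:Fin 3) ≠ 0 by decide)] at h1
  · -- multidegrees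
    intro mo hmo
    have hco : coeff mo ((X (0, 0) * X (1, 1) - X (1, 0) * X (0, 1)) ^ a *
        (X (0, 0) * X (1, 2) - X (1, 0) * X (0, 2)) ^ b *
        (X (0, 1) * X (1, 2) - X (1, 1) * X (0, 2)) ^ c : MvPolynomial (Fin 2 × Fin 3) f) ≠ 0 :=
      (mem_support_iff).mp hmo
    refine ⟨?_, ?_, ?_⟩
    · set w : Fin 2 × Fin 3 → ℕ := fun v => if v.2 = 0 then 1 else 0 with hw
      have h01 := IWH_bracket (f := f) w 0 1 (by norm_num [hw])
      have h02 := IWH_bracket (f := f) w 0 2 (by norm_num [hw])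
      have h12 := IWH_bracket (f := f) w 1 2 (by norm_num [hw])
      have hP := ((IWH_pow h01 a).mul (IWH_pow h02 b)).mul (IWH_pow h12 c)
      have := hP hco
      rw [weight_col 0 mo] at this
      simpa [hw, smul_eq_mul] using this
    · set w : Fin 2 × Fin 3 → ℕ := fun v => if v.2 = 1 then 1 else 0 with hw
      have h01 := IWH_bracket (f := f) w 0 1 (by norm_num [hw])
      have h02 := IWH_bracket (f := f) w 0 2 (by norm_num [hw])
      have h12 := IWH_bracket (f := f) w 1 2 (by norm_num [hw])
      have hP := ((IWH_pow h01 a).mul (IWH_pow h02 b)).mul (IWH_pow h12 c)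
      have := hP hco
      rw [weight_col 1 mo] at this
      simpa [hw, smul_eq_mul] using this
    · set w : Fin 2 × Fin 3 → ℕ := fun v => if v.2 = 2 then 1 else 0 with hw
      have h01 := IWH_bracket (f := f) w 0 1 (by norm_num [hw])
      have h02 := IWH_bracket (f := f) w 0 2 (by norm_num [hw])
      have h12 := IWH_bracket (f := f) w 1 2 (by norm_num [hw])
      have hP := ((IWH_pow h01 a).mul (IWH_pow h02 b)).mul (IWH_pow h12 c)
      have := hP hco
      rw [weight_col 2 mo] at this
      simpa [hw, smul_eq_mul] using this
  · -- invariance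
    intro g
    rw [map_mul, map_mul, map_pow, map_pow, map_pow,
      sl2Act_bracket g 0 1, sl2Act_bracket g 0 2, sl2Act_bracket g 1 2]
end
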